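/- Let β > 0, 0 < c < 1, n ∈ ℕ, and t ∈ ℝ. Then for all x ∈ ℝ, M_n(x; β, c·e^{−t}) = Σ_{k=0}^{n} ((−n)_k (−x)_k / (k! (β)_k c^k)) · M_{n−k}(x−k; β+k, c) · (1−e^{t})^k. -/

import Mathlib

open Finset

/-- Pochhammer symbol `(a)_j = a(a+1)⋯(a+j-1)`. -/
noncomputable def poch (a : ℝ) (j : ℕ) : ℝ := ∏ i ∈ Finset.range j, (a + i)

/-- Meixner polynomial `M_n(x; β, c)`. -/
noncomputable def meixnerM (n : ℕ) (x β c : ℝ) : ℝ :=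
  ∑ k ∈ Finset.range (n + 1),
    poch (-(n : ℝ)) k * poch (-x) k / (poch β k * (k.factorial : ℝ)) * ((c - 1) / c) ^ k

/-!
The argument `(c' - 1)/c'` of the hypergeometric series of `M_n(x; β, c')` at `c' = c e^{-t}` is
`(c - 1)/c + (1 - e^t)/c`. Expanding `(u + v)^j` binomially and reindexing the triangular double
sum, the Pochhammer splitting `(a)_{k+m} = (a)_k (a+k)_m` turns the coefficient of `u^k v^m` into
`[k-th coefficient of M_n(x; β, ·)] · [m-th coefficient of M_{n-k}(x-k; β+k, ·)]`.
-/

lemma poch_add (a : ℝ) (k m : ℕ) : poch a (k + m) = poch a k * poch (a + k) m := by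
  simp only [poch, prod_range_add, Nat.cast_add, add_assoc]

noncomputable def meixnerCoeff (n : ℕ) (x β : ℝ) (k : ℕ) : ℝ :=
  poch (-(n : ℝ)) k * poch (-x) k / (poch β k * (k.factorial : ℝ))

noncomputable def meixnerSum (n : ℕ) (x β w : ℝ) : ℝ :=
  ∑ k ∈ range (n + 1), meixnerCoeff n x β k * w ^ k

lemma meixnerM_eq_meixnerSum (n : ℕ) (x β c : ℝ) :
    meixnerM n x β c = meixnerSum n x β ((c - 1) / c) := rfl

lemma meixnerCoeff_add_mul_choose {n k : ℕ} (hk : k ≤ n) (x β : ℝ) (m : ℕ) :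
    meixnerCoeff n x β (k + m) * ((k + m).choose k : ℝ) =
      meixnerCoeff n x β k * meixnerCoeff (n - k) (x - k) (β + k) m := by
  have hn : (-(n : ℝ)) + k = -((n - k : ℕ) : ℝ) := by rw [Nat.cast_sub hk]; ring
  have hx : -x + k = -(x - k) := by ring
  have hfact : ((k + m).factorial : ℝ) = (k + m).choose k * k.factorial * m.factorial := by
    rw [Nat.choose_symm_add]; exact_mod_cast (Nat.add_choose_mul_factorial_mul_factorial k m).symm
  have hchoose : ((k + m).choose k : ℝ) ≠ 0 := by
    exact_mod_cast (Nat.choose_pos (Nat.le_add_right k m)).ne'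
  simp only [meixnerCoeff, poch_add, hn, hx, hfact]
  field_simp

lemma meixnerSum_add (n : ℕ) (x β u v : ℝ) :
    meixnerSum n x β (u + v) =
      ∑ k ∈ range (n + 1),
        meixnerCoeff n x β k * u ^ k * meixnerSum (n - k) (x - k) (β + k) v := by
  let term : ℕ → ℕ → ℝ := fun k m =>
    meixnerCoeff n x β (k + m) * ((k + m).choose k : ℝ) * u ^ k * v ^ m
  calc meixnerSum n x β (u + v)
      = ∑ j ∈ range (n + 1), ∑ k ∈ range (j + 1), term k (j - k) := by
        refine sum_congr rfl fun j _ => ?_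
        rw [add_pow, mul_sum]
        refine sum_congr rfl fun k hk => ?_
        simp only [term, Nat.add_sub_cancel' (Nat.lt_succ_iff.mp (mem_range.mp hk))]
        ring
    _ = ∑ k ∈ range (n + 1), ∑ m ∈ range (n + 1 - k), term k m := sum_range_diag_flip _ _
    _ = _ := by
        refine sum_congr rfl fun k hk => ?_
        have hkn := Nat.lt_succ_iff.mp (mem_range.mp hk)
        rw [meixnerSum, mul_sum, Nat.sub_add_comm hkn]
        refine sum_congr rfl fun m _ => ?_
        simp only [term, meixnerCoeff_add_mul_choose hkn]
        ring

theorem meixner_toda_expansion_second_general (β c : ℝ) (hc0 : 0 < c)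
    (n : ℕ) (t : ℝ) (x : ℝ) :
    meixnerM n x β (c * Real.exp (-t)) =
      ∑ k ∈ Finset.range (n + 1),
        poch (-(n : ℝ)) k * poch (-x) k / ((k.factorial : ℝ) * poch β k * c ^ k) *
          meixnerM (n - k) (x - k) (β + k) c * (1 - Real.exp t) ^ k := by
  have harg :
      (c * Real.exp (-t) - 1) / (c * Real.exp (-t)) = (1 - Real.exp t) / c + (c - 1) / c := by
    rw [Real.exp_neg]
    field_simp
    ring
  rw [meixnerM_eq_meixnerSum, harg, meixnerSum_add]
  refine sum_congr rfl fun k _ => ?_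
  rw [meixnerCoeff, ← meixnerM_eq_meixnerSum, div_pow]
  ring

theorem meixner_toda_expansion_second (β c : ℝ) (hβ : 0 < β) (hc0 : 0 < c) (hc1 : c < 1)
    (n : ℕ) (t : ℝ) (x : ℝ) :
    meixnerM n x β (c * Real.exp (-t)) =
      ∑ k ∈ Finset.range (n + 1),
        poch (-(n : ℝ)) k * poch (-x) k / ((k.factorial : ℝ) * poch β k * c ^ k) *
          meixnerM (n - k) (x - k) (β + k) c * (1 - Real.exp t) ^ k :=
  meixner_toda_expansion_second_general β c hc0 n t x
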